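/- arXiv:2210.04374 — 3 statements merged into one kernel-verified Lean document; each statement's English description precedes it below -/
import Mathlib

section
/- Let λ ≥ 3 be an integer divisible by 3 and let X be a λ-normed plane with norm N. Let x₁, x₂, x₃ ∈ ℝ² be three points not lying on one straight line, such that all Euclidean angles of the triangle x₁x₂x₃ are less than 120°, and let p be the Torricelli point of this triangle (the point for which the Euclidean angles ∠x₁px₂, ∠x₂px₃, ∠x₁px₃ all equal 120°). Write x̂ᵢ = (xᵢ − p)/N(xᵢ − p). If none of x̂₁, x̂₂, x̂₃ coincides with a vertex of the regular 2λ-gon that is the unit ball of N, then ft(x₁, x₂, x₃) (with respect to N) is a non-degenerate convex polygon (a compact convex set with nonempty interior); if the x̂ᵢ coincide with vertices of the 2λ-gon, then ft(x₁, x₂, x₃) = {p}. -/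
open Real

/-- The vertices of a regular 2λ-gon centered at the origin, with circumradius r and
initial angle θ. -/
noncomputable def polyVerts (lam : ℕ) (r θ : ℝ) : Fin (2 * lam) → ℝ × ℝ :=
  fun k => (r * Real.cos (θ + (k : ℕ) * π / lam), r * Real.sin (θ + (k : ℕ) * π / lam))

/-- N : ℝ² → ℝ is a norm. -/
def IsNormOn (N : ℝ × ℝ → ℝ) : Prop :=
  (∀ x y : ℝ × ℝ, N (x + y) ≤ N x + N y) ∧
  (∀ (c : ℝ) (x : ℝ × ℝ), N (c • x) = |c| * N x) ∧
  (∀ x : ℝ × ℝ, N x = 0 → x = 0)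

/-- N is a λ-plane norm: a norm on ℝ² whose closed unit ball is a regular 2λ-gon
centered at the origin. -/
def IsLambdaNorm (lam : ℕ) (N : ℝ × ℝ → ℝ) : Prop :=
  IsNormOn N ∧ ∃ r > (0 : ℝ), ∃ θ : ℝ,
    {x : ℝ × ℝ | N x ≤ 1} = convexHull ℝ (Set.range (polyVerts lam r θ))

/-- φ is a norming functional for x with respect to the norm N: the dual norm of φ is
at most one (‖φ‖ ≤ 1, which together with φ x = N x = 1 for the unit vectors considered
gives ‖φ‖ = 1) and φ x = N x. -/
def IsNormingN (N : ℝ × ℝ → ℝ) (φ : (ℝ × ℝ) →ₗ[ℝ] ℝ) (x : ℝ × ℝ) : Prop :=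
  (∀ y : ℝ × ℝ, |φ y| ≤ N y) ∧ φ x = N x

/-- A unit vector (w.r.t. N) of the first type: an interior point of a flattening of the
unit circle of N. -/
def FirstTypeN (N : ℝ × ℝ → ℝ) (x : ℝ × ℝ) : Prop :=
  N x = 1 ∧ ∃ u v : ℝ × ℝ, u ≠ v ∧ N u = 1 ∧ N v = 1 ∧
    x ∈ openSegment ℝ u v ∧ ∀ z ∈ segment ℝ u v, N z = 1

/-- A unit vector (w.r.t. N) of the zero type: not of the first type. -/
def ZeroTypeN (N : ℝ × ℝ → ℝ) (x : ℝ × ℝ) : Prop :=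
  N x = 1 ∧ ¬ FirstTypeN N x

/-- The Fermat–Torricelli set of a finite tuple of points of ℝ² with respect to the
norm N. -/
def ftSetN (N : ℝ × ℝ → ℝ) {n : ℕ} (x : Fin n → ℝ × ℝ) : Set (ℝ × ℝ) :=
  {p | ∀ q : ℝ × ℝ, ∑ i, N (p - x i) ≤ ∑ i, N (q - x i)}

/-- The Euclidean angle between two vectors of ℝ² (with respect to the standard inner
product on ℝ²). -/
noncomputable def eangle (u v : ℝ × ℝ) : ℝ :=
  Real.arccos ((u.1 * v.1 + u.2 * v.2) /
    (Real.sqrt (u.1 ^ 2 + u.2 ^ 2) * Real.sqrt (v.1 ^ 2 + v.2 ^ 2)))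

/-!
When `3 ∣ λ`, the rotation through `2π/3` permutes the vertices of the `2λ`-gon, and the three
rays from the Torricelli point `p` are images of each other under it. A point `q` is a
Fermat–Torricelli point as soon as there are functionals `Lᵢ` of dual norm at most one with
`Lᵢ (xᵢ - q) = N (xᵢ - q)` and `L₁ + L₂ + L₃ = 0`; rotating one norming functional through
`±2π/3` produces such a triple, because `cos γ + cos (γ + 2π/3) + cos (γ - 2π/3) = 0`.

If `x̂₁` lies inside an edge of the polygon, the three edge functionals norm whole open cones
around the directions `xᵢ - p`, so every `q` near `p` is a Fermat–Torricelli point. If `x̂₁` is a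
vertex, the vertex functionals attain their norm only on the rays through their vertices, so any
Fermat–Torricelli point `q` has `q - p` parallel to both `x̂₁` and `x̂₂`, hence `q = p`.
-/

namespace IsNormOn

variable {N : ℝ × ℝ → ℝ} (hN : IsNormOn N)
include hN

theorem map_zero : N 0 = 0 := by
  simpa using hN.2.1 0 0

theorem map_neg (x : ℝ × ℝ) : N (-x) = N x := by
  simpa using hN.2.1 (-1) x

theorem sub_comm (x y : ℝ × ℝ) : N (x - y) = N (y - x) := by
  rw [← hN.map_neg, neg_sub]

theorem nonneg (x : ℝ × ℝ) : 0 ≤ N x := by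
  have h := hN.1 x (-x)
  rw [add_neg_cancel, hN.map_zero, hN.map_neg] at h
  linarith

theorem pos {x : ℝ × ℝ} (hx : x ≠ 0) : 0 < N x :=
  (hN.nonneg x).lt_of_ne fun h => hx (hN.2.2 x h.symm)

theorem smul_of_nonneg {c : ℝ} (hc : 0 ≤ c) (x : ℝ × ℝ) : N (c • x) = c * N x := by
  rw [hN.2.1, abs_of_nonneg hc]

theorem inv_smul_self {x : ℝ × ℝ} (hx : x ≠ 0) : N ((N x)⁻¹ • x) = 1 := by
  rw [hN.smul_of_nonneg (inv_nonneg.mpr (hN.nonneg x)), inv_mul_cancel₀ (hN.pos hx).ne']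

theorem convexOn : ConvexOn ℝ Set.univ N :=
  (Seminorm.of N hN.1 fun c x => by rw [hN.2.1, Real.norm_eq_abs]).convexOn

theorem continuous : Continuous N :=
  continuousOn_univ.mp (hN.convexOn.continuousOn isOpen_univ)

theorem exists_norm_le_mul : ∃ C > 0, ∀ v : ℝ × ℝ, ‖v‖ ≤ C * N v := by
  obtain ⟨v₀, hv₀, hmin⟩ := (isCompact_sphere (0 : ℝ × ℝ) 1).exists_isMinOn
    (NormedSpace.sphere_nonempty.mpr zero_le_one) hN.continuous.continuousOn
  have hv₀ne : v₀ ≠ 0 := ne_zero_of_mem_unit_sphere ⟨v₀, hv₀⟩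
  refine ⟨(N v₀)⁻¹, inv_pos.mpr (hN.pos hv₀ne), fun v => ?_⟩
  rcases eq_or_ne v 0 with rfl | hv
  · simp [hN.map_zero]
  have hmem : ‖v‖⁻¹ • v ∈ Metric.sphere (0 : ℝ × ℝ) 1 := by
    simp [norm_smul, hv]
  have hle : N v₀ ≤ ‖v‖⁻¹ * N v := by
    simpa [hN.smul_of_nonneg (inv_nonneg.mpr (norm_nonneg v))] using hmin hmem
  rw [inv_mul_eq_div, le_div_iff₀ (hN.pos hv₀ne)]
  rw [inv_mul_eq_div, le_div_iff₀ (norm_pos_iff.mpr hv)] at hle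
  linarith

theorem abs_le_of_le_one (L : (ℝ × ℝ) →ₗ[ℝ] ℝ) (hL : ∀ y, N y ≤ 1 → L y ≤ 1) (y : ℝ × ℝ) :
    |L y| ≤ N y := by
  have key : ∀ z, L z ≤ N z := by
    intro z
    rcases eq_or_ne z 0 with rfl | hz
    · simp [hN.map_zero]
    have h := hL _ (hN.inv_smul_self hz).le
    rw [map_smul, smul_eq_mul, inv_mul_le_iff₀ (hN.pos hz), mul_one] at h
    exact h
  refine abs_le.mpr ⟨?_, key y⟩
  have := key (-y)
  rw [_root_.map_neg, hN.map_neg] at this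
  linarith

end IsNormOn

theorem eq_of_mem_convexHull_of_apply_eq_one {E : Type*} [AddCommGroup E] [Module ℝ E]
    (L : E →ₗ[ℝ] ℝ) {s : Set E} {x₀ y : E} (hx₀ : L x₀ ≤ 1) (hs : ∀ x ∈ s, L x < 1 ∨ x = x₀)
    (hy : y ∈ convexHull ℝ s) (hLy : L y = 1) : y = x₀ := by
  have hconv : Convex ℝ ({x | L x < 1} ∪ {x₀}) := by
    refine convex_iff_forall_pos.mpr ?_
    rintro x (hx | rfl) z (hz | rfl) a b ha hb hab
    · left; simp only [Set.mem_ofPred_eq, map_add, map_smul, smul_eq_mul] at hx hz ⊢; nlinarith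
    · left; simp only [Set.mem_ofPred_eq, map_add, map_smul, smul_eq_mul] at hx ⊢; nlinarith
    · left; simp only [Set.mem_ofPred_eq, map_add, map_smul, smul_eq_mul] at hz ⊢; nlinarith
    · right; exact Convex.combo_self hab _
  rcases convexHull_min (fun x hx => hs x hx) hconv hy with h | h
  · exact absurd hLy (ne_of_lt h)
  · exact h

section FermatTorricelli

variable {N : ℝ × ℝ → ℝ} {n : ℕ} {x : Fin n → ℝ × ℝ}

theorem mem_ftSetN_of_isNormingN (hN : IsNormOn N) {q : ℝ × ℝ} {L : Fin n → (ℝ × ℝ) →ₗ[ℝ] ℝ}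
    (hL : ∀ i, IsNormingN N (L i) (x i - q)) (hsum : ∑ i, L i = 0) : q ∈ ftSetN N x := by
  intro z
  have hz : ∑ i, L i (q - z) = 0 := by rw [← LinearMap.sum_apply, hsum, LinearMap.zero_apply]
  calc ∑ i, N (q - x i) = ∑ i, L i (x i - q) := by
        simp only [(hL _).2, hN.sub_comm q]
    _ = ∑ i, L i (x i - z) := by
        simp only [← sub_add_sub_cancel (x _) q z, map_add, Finset.sum_add_distrib, hz, add_zero]
    _ ≤ ∑ i, N (z - x i) := Finset.sum_le_sum fun i _ => by
        rw [hN.sub_comm z]; exact (le_abs_self _).trans ((hL i).1 _)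

theorem isNormingN_of_mem_ftSetN (hN : IsNormOn N) {p q : ℝ × ℝ}
    {L : Fin n → (ℝ × ℝ) →ₗ[ℝ] ℝ} (hL : ∀ i, IsNormingN N (L i) (x i - p))
    (hsum : ∑ i, L i = 0) (hq : q ∈ ftSetN N x) (i : Fin n) : IsNormingN N (L i) (x i - q) := by
  refine ⟨(hL i).1, ?_⟩
  have hle : ∀ j ∈ Finset.univ, L j (x j - q) ≤ N (x j - q) :=
    fun j _ => (le_abs_self _).trans ((hL j).1 _)
  have hsum_eq : ∑ j, L j (x j - q) = ∑ j, N (x j - q) := by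
    refine le_antisymm (Finset.sum_le_sum hle) ?_
    have hz : ∑ j, L j (p - q) = 0 := by rw [← LinearMap.sum_apply, hsum, LinearMap.zero_apply]
    calc ∑ j, N (x j - q) = ∑ j, N (q - x j) := by simp only [hN.sub_comm (x _) q]
      _ ≤ ∑ j, N (p - x j) := hq p
      _ = ∑ j, L j (x j - p) := by simp only [(hL _).2, hN.sub_comm p]
      _ = ∑ j, L j (x j - q) := by
        simp only [← sub_add_sub_cancel (x _) p q, map_add, Finset.sum_add_distrib, hz, add_zero]
  exact (Finset.sum_eq_sum_iff_of_le hle).mp hsum_eq i (Finset.mem_univ i)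

theorem mem_interior_ftSetN_of_isNormingN (hN : IsNormOn N) {p : ℝ × ℝ}
    {C : Fin n → Set (ℝ × ℝ)} {L : Fin n → (ℝ × ℝ) →ₗ[ℝ] ℝ} (hC : ∀ i, IsOpen (C i))
    (hp : ∀ i, x i - p ∈ C i) (hL : ∀ i, ∀ v ∈ C i, IsNormingN N (L i) v)
    (hsum : ∑ i, L i = 0) : p ∈ interior (ftSetN N x) := by
  refine interior_mono (s := ⋂ i, (fun q => x i - q) ⁻¹' C i) ?_ ?_
  · intro q hq
    exact mem_ftSetN_of_isNormingN hN (fun i => hL i _ (Set.mem_iInter.mp hq i)) hsum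
  · rw [(isOpen_iInter_of_finite fun i => (hC i).preimage (by fun_prop)).interior_eq]
    exact Set.mem_iInter.mpr hp

theorem ftSetN_eq_iInter : ftSetN N x = ⋂ z, {q | ∑ i, N (q - x i) ≤ ∑ i, N (z - x i)} := by
  ext q; simp [ftSetN]

theorem convex_ftSetN (hN : IsNormOn N) : Convex ℝ (ftSetN N x) := by
  have hF : ConvexOn ℝ Set.univ fun q => ∑ i, N (q - x i) := by
    refine ⟨convex_univ, fun q₁ _ q₂ _ a b ha hb hab => ?_⟩
    simp only [smul_eq_mul, Finset.mul_sum, ← Finset.sum_add_distrib]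
    refine Finset.sum_le_sum fun i _ => ?_
    have h := hN.convexOn.2 (Set.mem_univ (q₁ - x i)) (Set.mem_univ (q₂ - x i)) ha hb hab
    rwa [smul_sub, smul_sub, sub_add_sub_comm, ← add_smul, hab, one_smul] at h
  rw [ftSetN_eq_iInter]
  exact convex_iInter fun z => by simpa using hF.convex_le (∑ i, N (z - x i))

theorem isCompact_ftSetN [NeZero n] (hN : IsNormOn N) : IsCompact (ftSetN N x) := by
  obtain ⟨C, hC₀, hC⟩ := hN.exists_norm_le_mul
  have hNc := hN.continuous
  refine Metric.isCompact_of_isClosed_isBounded ?_ ?_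
  · rw [ftSetN_eq_iInter]
    exact isClosed_iInter fun z => isClosed_le (by fun_prop) continuous_const
  · refine (Metric.isBounded_closedBall (x := x 0) (r := C * ∑ i, N (x 0 - x i))).subset ?_
    intro q hq
    rw [Metric.mem_closedBall, dist_eq_norm]
    have h₀ : N (q - x 0) ≤ ∑ i, N (q - x i) :=
      Finset.single_le_sum (f := fun i => N (q - x i)) (fun i _ => hN.nonneg _)
        (Finset.mem_univ 0)
    exact (hC _).trans (mul_le_mul_of_nonneg_left (h₀.trans (hq (x 0))) hC₀.le)

end FermatTorricelli

theorem cos_two_pi_div_three : cos (2 * π / 3) = -(1 / 2) := by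
  rw [show 2 * π / 3 = π - π / 3 by ring, cos_pi_sub, cos_pi_div_three]

theorem sin_two_pi_div_three : sin (2 * π / 3) = √3 / 2 := by
  rw [show 2 * π / 3 = π - π / 3 by ring, sin_pi_sub, sin_pi_div_three]

theorem sin_ne_zero_of_cos_eq_neg_half {α : ℝ} (h : cos α = -(1 / 2)) : sin α ≠ 0 := by
  intro hs
  have := sin_sq_add_cos_sq α
  rw [hs, h] at this
  norm_num at this

theorem cos_le_cos_of_le_of_le_two_pi_sub {c x : ℝ} (hc : 0 ≤ c) (h₁ : c ≤ x)
    (h₂ : x ≤ 2 * π - c) : cos x ≤ cos c := by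
  rcases le_total x π with hx | hx
  · exact cos_le_cos_of_nonneg_of_le_pi hc hx h₁
  · rw [← cos_two_pi_sub x]
    exact cos_le_cos_of_nonneg_of_le_pi hc (by linarith) (by linarith)

section PlaneGeometry

noncomputable def dir (α : ℝ) : ℝ × ℝ := (cos α, sin α)

noncomputable def rot (α : ℝ) : (ℝ × ℝ) →ₗ[ℝ] ℝ × ℝ where
  toFun y := (cos α * y.1 - sin α * y.2, sin α * y.1 + cos α * y.2)
  map_add' y z := by ext <;> simp only [Prod.fst_add, Prod.snd_add] <;> ring
  map_smul' c y := by ext <;> simp only [Prod.smul_fst, Prod.smul_snd, smul_eq_mul,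
    RingHom.id_apply] <;> ring

noncomputable def proj (γ : ℝ) : (ℝ × ℝ) →ₗ[ℝ] ℝ :=
  cos γ • LinearMap.fst ℝ ℝ ℝ + sin γ • LinearMap.snd ℝ ℝ ℝ

def dot (u v : ℝ × ℝ) : ℝ := u.1 * v.1 + u.2 * v.2

def cross (u v : ℝ × ℝ) : ℝ := u.1 * v.2 - u.2 * v.1

noncomputable def euclNorm (u : ℝ × ℝ) : ℝ := √(u.1 ^ 2 + u.2 ^ 2)

def openCone (u v : ℝ × ℝ) : Set (ℝ × ℝ) := {w | ∃ a b : ℝ, 0 < a ∧ 0 < b ∧ w = a • u + b • v}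

@[simp] theorem rot_apply (α : ℝ) (y : ℝ × ℝ) :
    rot α y = (cos α * y.1 - sin α * y.2, sin α * y.1 + cos α * y.2) := rfl

@[simp] theorem proj_apply (γ : ℝ) (y : ℝ × ℝ) : proj γ y = cos γ * y.1 + sin γ * y.2 := rfl

theorem rot_dir (α β : ℝ) : rot α (dir β) = dir (β + α) := by
  ext <;> simp only [rot_apply, dir, cos_add, sin_add] <;> ring

theorem proj_dir (γ α : ℝ) : proj γ (dir α) = cos (α - γ) := by
  simp only [proj_apply, dir, cos_sub]; ring

theorem cross_dir (α β : ℝ) : cross (dir α) (dir β) = sin (β - α) := by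
  simp only [cross, dir, sin_sub]; ring

theorem dir_eq_of_cos_sub_eq_one {α β : ℝ} (h : cos (α - β) = 1) : dir α = dir β := by
  rw [cos_sub] at h
  have h₁ := sin_sq_add_cos_sq α
  have h₂ := sin_sq_add_cos_sq β
  simp only [dir, Prod.mk.injEq]
  constructor <;> nlinarith [sq_nonneg (cos α - cos β), sq_nonneg (sin α - sin β)]

theorem sin_smul_dir (α β δ : ℝ) :
    sin δ • dir α = sin (β + δ - α) • dir β + sin (α - β) • dir (β + δ) := by
  have h := sin_sq_add_cos_sq β
  ext <;> simp only [dir, Prod.smul_fst, Prod.smul_snd, Prod.fst_add, Prod.snd_add, smul_eq_mul,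
    sin_sub, sin_add, cos_add]
  · linear_combination (-(sin δ * cos α)) * h
  · linear_combination (-(sin δ * sin α)) * h

theorem proj_add_proj_add_proj {α : ℝ} (hα : cos α = -(1 / 2)) (γ : ℝ) :
    proj γ + proj (γ + α) + proj (γ - α) = 0 := by
  ext
  · simp only [LinearMap.add_apply, LinearMap.comp_apply, proj_apply, cos_add, cos_sub, sin_add,
      sin_sub, hα, LinearMap.zero_apply, LinearMap.inl_apply]
    ring
  · simp only [LinearMap.add_apply, LinearMap.comp_apply, proj_apply, cos_add, cos_sub, sin_add,
      sin_sub, hα, LinearMap.zero_apply, LinearMap.inr_apply]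
    ring

theorem exists_pos_smul_dir {z : ℝ × ℝ} (hz : z ≠ 0) : ∃ ρ > (0 : ℝ), ∃ α, z = ρ • dir α := by
  set w : ℂ := ⟨z.1, z.2⟩
  have hw : w ≠ 0 := fun h => hz (Prod.ext (congrArg Complex.re h) (congrArg Complex.im h))
  refine ⟨‖w‖, norm_pos_iff.mpr hw, Complex.arg w, ?_⟩
  ext
  · exact (Complex.norm_mul_cos_arg w).symm
  · exact (Complex.norm_mul_sin_arg w).symm

theorem eq_smul_add_smul_of_cross_ne_zero {u v : ℝ × ℝ} (h : cross u v ≠ 0) (w : ℝ × ℝ) :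
    w = (cross w v / cross u v) • u + (cross u w / cross u v) • v := by
  ext <;> simp only [Prod.fst_add, Prod.snd_add, Prod.smul_fst, Prod.smul_snd, smul_eq_mul] <;>
    field_simp <;> simp only [cross] <;> ring

theorem eq_zero_of_smul_eq_smul_of_cross_ne_zero {u v : ℝ × ℝ} (h : cross u v ≠ 0) {a b : ℝ}
    (hab : a • u = b • v) : a = 0 := by
  have h₁ := congrArg Prod.fst hab
  have h₂ := congrArg Prod.snd hab
  simp only [Prod.smul_fst, Prod.smul_snd, smul_eq_mul] at h₁ h₂
  have : a * cross u v = 0 := by simp only [cross]; linear_combination v.2 * h₁ - v.1 * h₂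
  exact (mul_eq_zero.mp this).resolve_right h

theorem isOpen_openCone {u v : ℝ × ℝ} (h : cross u v ≠ 0) : IsOpen (openCone u v) := by
  have hcone :
      openCone u v = {w | 0 < cross w v / cross u v} ∩ {w | 0 < cross u w / cross u v} := by
    ext w
    constructor
    · rintro ⟨a, b, ha, hb, rfl⟩
      have e₁ : cross (a • u + b • v) v = a * cross u v := by
        simp only [cross, Prod.fst_add, Prod.snd_add, Prod.smul_fst, Prod.smul_snd, smul_eq_mul]
        ring
      have e₂ : cross u (a • u + b • v) = b * cross u v := by
        simp only [cross, Prod.fst_add, Prod.snd_add, Prod.smul_fst, Prod.smul_snd, smul_eq_mul]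
        ring
      simp only [Set.mem_inter_iff, Set.mem_ofPred_eq, e₁, e₂, mul_div_cancel_right₀ _ h]
      exact ⟨ha, hb⟩
    · rintro ⟨ha, hb⟩
      exact ⟨_, _, ha, hb, eq_smul_add_smul_of_cross_ne_zero h w⟩
  rw [hcone]
  exact (isOpen_lt continuous_const (by unfold cross; fun_prop)).inter
    (isOpen_lt continuous_const (by unfold cross; fun_prop))

theorem smul_map_mem_openCone (A : (ℝ × ℝ) →ₗ[ℝ] ℝ × ℝ) {u v w : ℝ × ℝ} (hw : w ∈ openCone u v)
    {t : ℝ} (ht : 0 < t) : t • A w ∈ openCone (A u) (A v) := by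
  obtain ⟨a, b, ha, hb, rfl⟩ := hw
  exact ⟨t * a, t * b, by positivity, by positivity, by
    rw [map_add, map_smul, map_smul, smul_add, smul_smul, smul_smul]⟩

theorem eangle_eq (u v : ℝ × ℝ) : eangle u v = arccos (dot u v / (euclNorm u * euclNorm v)) := rfl

theorem euclNorm_pos {u : ℝ × ℝ} (hu : u ≠ 0) : 0 < euclNorm u := by
  refine sqrt_pos.mpr ?_
  rcases ne_or_eq u.1 0 with h | h
  · positivity
  · have : u.2 ≠ 0 := fun h' => hu (Prod.ext h h')
    positivity

theorem euclNorm_sq (u : ℝ × ℝ) : euclNorm u ^ 2 = u.1 ^ 2 + u.2 ^ 2 :=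
  sq_sqrt (by positivity)

theorem ne_zero_of_eangle_eq {u v : ℝ × ℝ} (h : eangle u v = 2 * π / 3) : u ≠ 0 ∧ v ≠ 0 := by
  have hπ : π / 2 ≠ 2 * π / 3 := by linarith [pi_pos]
  constructor <;> rintro rfl <;> simp [eangle_eq, dot] at h <;> exact hπ h

theorem dot_eq_of_eangle_eq {u v : ℝ × ℝ} (h : eangle u v = 2 * π / 3) :
    dot u v = -(1 / 2) * (euclNorm u * euclNorm v) := by
  obtain ⟨hu, hv⟩ := ne_zero_of_eangle_eq h
  have hD := mul_pos (euclNorm_pos hu) (euclNorm_pos hv)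
  set c := dot u v / (euclNorm u * euclNorm v)
  have hπ := pi_pos
  have hc₁ : -1 ≤ c := by
    by_contra! hc
    rw [eangle_eq, arccos_of_le_neg_one hc.le] at h
    linarith
  have hc₂ : c ≤ 1 := by
    by_contra! hc
    rw [eangle_eq, arccos_of_one_le hc.le] at h
    linarith
  have hcos : c = -(1 / 2) := by
    rw [← cos_arccos hc₁ hc₂, ← eangle_eq, h, show 2 * π / 3 = π - π / 3 by ring, cos_pi_sub,
      cos_pi_div_three]
  rwa [div_eq_iff hD.ne'] at hcos

theorem eq_smul_rot_of_dot_of_cross {u v : ℝ × ℝ} (hu : u ≠ 0) {α : ℝ}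
    (hdot : dot u v = cos α * (euclNorm u * euclNorm v))
    (hcross : cross u v = sin α * (euclNorm u * euclNorm v)) :
    v = (euclNorm v / euclNorm u) • rot α u := by
  have hu₀ := (euclNorm_pos hu).ne'
  have hsq := euclNorm_sq u
  simp only [dot, cross] at hdot hcross
  ext <;> simp only [Prod.smul_fst, Prod.smul_snd, rot_apply, smul_eq_mul] <;>
    field_simp <;> refine mul_left_cancel₀ hu₀ ?_
  · linear_combination v.1 * hsq + u.1 * hdot - u.2 * hcross
  · linear_combination v.2 * hsq + u.2 * hdot + u.1 * hcross

theorem exists_rot_of_eangle_eq {u v : ℝ × ℝ} (h : eangle u v = 2 * π / 3) :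
    ∃ α, (α = 2 * π / 3 ∨ α = -(2 * π / 3)) ∧ ∃ c > (0 : ℝ), v = c • rot α u := by
  obtain ⟨hu, hv⟩ := ne_zero_of_eangle_eq h
  have hdot := dot_eq_of_eangle_eq h
  have hcross : cross u v ^ 2 = (√3 / 2 * (euclNorm u * euclNorm v)) ^ 2 := by
    have lagrange : dot u v ^ 2 + cross u v ^ 2 = euclNorm u ^ 2 * euclNorm v ^ 2 := by
      rw [euclNorm_sq, euclNorm_sq]; simp only [dot, cross]; ring
    rw [hdot] at lagrange
    rw [mul_pow, div_pow, sq_sqrt (by norm_num : (0 : ℝ) ≤ 3)]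
    linear_combination lagrange
  have hc : 0 < euclNorm v / euclNorm u := div_pos (euclNorm_pos hv) (euclNorm_pos hu)
  rcases sq_eq_sq_iff_eq_or_eq_neg.mp hcross with hs | hs
  · refine ⟨2 * π / 3, Or.inl rfl, _, hc, eq_smul_rot_of_dot_of_cross hu ?_ ?_⟩
    · rw [cos_two_pi_div_three, hdot]
    · rw [sin_two_pi_div_three, hs]
  · refine ⟨-(2 * π / 3), Or.inr rfl, _, hc, eq_smul_rot_of_dot_of_cross hu ?_ ?_⟩
    · rw [cos_neg, cos_two_pi_div_three, hdot]
    · rw [sin_neg, sin_two_pi_div_three, hs, neg_mul]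

theorem eangle_smul_smul_ne_two_pi_div_three {w : ℝ × ℝ} {c c' : ℝ} (hc : 0 < c) (hc' : 0 < c') :
    eangle (c • w) (c' • w) ≠ 2 * π / 3 := by
  intro h
  obtain ⟨hu, hv⟩ := ne_zero_of_eangle_eq h
  have hneg := dot_eq_of_eangle_eq h
  have hpos := mul_pos (euclNorm_pos hu) (euclNorm_pos hv)
  have hdot : dot (c • w) (c' • w) = c * c' * (w.1 ^ 2 + w.2 ^ 2) := by
    simp only [dot, Prod.smul_fst, Prod.smul_snd, smul_eq_mul]; ring
  have : 0 ≤ dot (c • w) (c' • w) := by rw [hdot]; positivity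
  linarith

theorem exists_rot_of_torricelli {u₁ u₂ u₃ : ℝ × ℝ} (h₁₂ : eangle u₁ u₂ = 2 * π / 3)
    (h₂₃ : eangle u₂ u₃ = 2 * π / 3) (h₁₃ : eangle u₁ u₃ = 2 * π / 3) :
    ∃ α, (α = 2 * π / 3 ∨ α = -(2 * π / 3)) ∧
      (∃ c > (0 : ℝ), u₂ = c • rot α u₁) ∧ ∃ c > (0 : ℝ), u₃ = c • rot (-α) u₁ := by
  obtain ⟨α, hα, c₂, hc₂, rfl⟩ := exists_rot_of_eangle_eq h₁₂
  obtain ⟨β, hβ, c₃, hc₃, rfl⟩ := exists_rot_of_eangle_eq h₁₃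
  have hβα : β = -α := by
    rcases hα with rfl | rfl <;> rcases hβ with rfl | rfl
    · exact (eangle_smul_smul_ne_two_pi_div_three hc₂ hc₃ h₂₃).elim
    · rfl
    · exact (neg_neg _).symm
    · exact (eangle_smul_smul_ne_two_pi_div_three hc₂ hc₃ h₂₃).elim
  exact ⟨α, hα, ⟨c₂, hc₂, rfl⟩, c₃, hc₃, by rw [hβα]⟩

end PlaneGeometry

section RegularPolygon

variable {lam : ℕ} {r θ : ℝ}

noncomputable def vert (lam : ℕ) (r θ : ℝ) (j : ℤ) : ℝ × ℝ := r • dir (θ + j * π / lam)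

noncomputable def vertexFunctional (lam : ℕ) (r θ : ℝ) (j : ℤ) : (ℝ × ℝ) →ₗ[ℝ] ℝ :=
  r⁻¹ • proj (θ + j * π / lam)

/-- The functional equal to `1` on the edge from `vert j` to `vert (j + 1)`. -/
noncomputable def edgeFunctional (lam : ℕ) (r θ : ℝ) (j : ℤ) : (ℝ × ℝ) →ₗ[ℝ] ℝ :=
  (r * cos (π / (2 * lam)))⁻¹ • proj (θ + j * π / lam + π / (2 * lam))

theorem vert_add_mul (hlam : 0 < lam) (j q : ℤ) :
    vert lam r θ (j + q * (2 * lam)) = vert lam r θ j := by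
  have hl : (lam : ℝ) ≠ 0 := by positivity
  have h : θ + ((j + q * (2 * lam) : ℤ) : ℝ) * π / lam = θ + j * π / lam + q * (2 * π) := by
    push_cast; field_simp; ring
  simp only [vert, dir, h, cos_add_int_mul_two_pi, sin_add_int_mul_two_pi]

theorem exists_vert_eq (hlam : 0 < lam) (j i : ℤ) :
    ∃ s : ℕ, s < 2 * lam ∧ vert lam r θ i = vert lam r θ (j + s) := by
  have h2 : (0 : ℤ) < 2 * lam := by positivity
  have hmod := Int.emod_add_mul_ediv (i - j) (2 * lam)
  have hlt := Int.emod_lt_of_pos (i - j) h2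
  have hs : (((i - j) % (2 * lam)).toNat : ℤ) = (i - j) % (2 * lam) :=
    Int.toNat_of_nonneg (Int.emod_nonneg _ h2.ne')
  refine ⟨((i - j) % (2 * lam)).toNat, by omega, ?_⟩
  rw [← vert_add_mul hlam (j + ((i - j) % (2 * lam)).toNat) ((i - j) / (2 * lam))]
  congr 1
  linear_combination -hs - hmod

theorem range_polyVerts (hlam : 0 < lam) :
    Set.range (polyVerts lam r θ) = Set.range (vert lam r θ) := by
  apply subset_antisymm
  · rintro _ ⟨k, rfl⟩
    exact ⟨k, by simp [vert, polyVerts, dir]⟩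
  · rintro _ ⟨i, rfl⟩
    obtain ⟨s, hs, hi⟩ := exists_vert_eq (r := r) (θ := θ) hlam 0 i
    exact ⟨⟨s, hs⟩, by rw [hi, zero_add]; simp [vert, polyVerts, dir]⟩

theorem rot_vert (m j : ℤ) : rot (m * π / lam) (vert lam r θ j) = vert lam r θ (j + m) := by
  rw [vert, map_smul, rot_dir, vert]
  push_cast
  ring_nf

theorem rot_neg_vert (m j : ℤ) :
    rot (-(m * π / lam)) (vert lam r θ j) = vert lam r θ (j - m) := by
  rw [show -(m * π / lam) = ((-m : ℤ) : ℝ) * π / lam by push_cast; ring, rot_vert, sub_eq_add_neg]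

theorem cross_vert (i j : ℤ) :
    cross (vert lam r θ i) (vert lam r θ j) = r ^ 2 * sin ((j - i) * π / lam) := by
  have h := cross_dir (θ + i * π / lam) (θ + j * π / lam)
  simp only [cross, vert, dir, Prod.smul_fst, Prod.smul_snd, smul_eq_mul] at h ⊢
  rw [show (j - i) * π / lam = θ + j * π / lam - (θ + i * π / lam) by ring, ← h]
  ring

theorem isOpen_openCone_vert (hlam : 2 ≤ lam) (hr : r ≠ 0) (j : ℤ) :
    IsOpen (openCone (vert lam r θ j) (vert lam r θ (j + 1))) := by
  refine isOpen_openCone ?_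
  have hl : (2 : ℝ) ≤ lam := by exact_mod_cast hlam
  rw [cross_vert]
  push_cast
  rw [add_sub_cancel_left, one_mul]
  refine mul_ne_zero (pow_ne_zero 2 hr) (sin_pos_of_pos_of_lt_pi (by positivity) ?_).ne'
  rw [div_lt_iff₀ (by positivity)]
  nlinarith [pi_pos]

theorem vertexFunctional_vert (hr : r ≠ 0) (j i : ℤ) :
    vertexFunctional lam r θ j (vert lam r θ i) = cos ((i - j) * π / lam) := by
  rw [vertexFunctional, vert, LinearMap.smul_apply, map_smul, proj_dir, smul_eq_mul, smul_eq_mul,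
    inv_mul_cancel_left₀ hr]
  ring_nf

theorem edgeFunctional_vert (hr : r ≠ 0) (j i : ℤ) :
    edgeFunctional lam r θ j (vert lam r θ i) =
      cos ((2 * (i - j) - 1) * (π / (2 * lam))) / cos (π / (2 * lam)) := by
  rw [edgeFunctional, vert, LinearMap.smul_apply, map_smul, proj_dir, smul_eq_mul, smul_eq_mul,
    show θ + i * π / lam - (θ + j * π / lam + π / (2 * lam)) = (2 * (i - j) - 1) * (π / (2 * lam))
      by ring]
  field_simp

theorem cos_pi_div_two_mul_pos (hlam : 2 ≤ lam) : 0 < cos (π / (2 * lam)) := by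
  have hl : (2 : ℝ) ≤ lam := by exact_mod_cast hlam
  refine cos_pos_of_mem_Ioo ⟨by linarith [pi_pos, show 0 < π / (2 * lam) by positivity], ?_⟩
  rw [div_lt_div_iff₀ (by positivity) two_pos]
  nlinarith [pi_pos]

theorem edgeFunctional_vert_le_one (hlam : 2 ≤ lam) (hr : r ≠ 0) (j i : ℤ) :
    edgeFunctional lam r θ j (vert lam r θ i) ≤ 1 := by
  obtain ⟨s, hs, hi⟩ := exists_vert_eq (r := r) (θ := θ) (zero_lt_two.trans_le hlam) j i
  have hc := cos_pi_div_two_mul_pos hlam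
  rw [hi, edgeFunctional_vert hr, div_le_one hc]
  push_cast
  rw [add_sub_cancel_left]
  rcases Nat.eq_zero_or_pos s with rfl | hs₀
  · rw [Nat.cast_zero, mul_zero, zero_sub, neg_one_mul, cos_neg]
  · have hs₁ : (1 : ℝ) ≤ s := by exact_mod_cast hs₀
    have hs₂ : (s : ℝ) + 1 ≤ 2 * lam := by exact_mod_cast hs
    have hl : (0 : ℝ) < lam := by positivity
    refine cos_le_cos_of_le_of_le_two_pi_sub (by positivity) ?_ ?_
    · nlinarith [show 0 < π / (2 * lam) by positivity]
    · have : 2 * π = 4 * lam * (π / (2 * lam)) := by field_simp; ring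
      nlinarith [show 0 < π / (2 * lam) by positivity]

theorem edgeFunctional_smul_vert_add_smul_vert (hlam : 2 ≤ lam) (hr : r ≠ 0) (j : ℤ) (a b : ℝ) :
    edgeFunctional lam r θ j (a • vert lam r θ j + b • vert lam r θ (j + 1)) = a + b := by
  have hc := (cos_pi_div_two_mul_pos hlam).ne'
  have hl : (lam : ℝ) ≠ 0 := by positivity
  simp only [map_add, map_smul, edgeFunctional_vert hr, smul_eq_mul]
  push_cast
  rw [show (2 * ((j : ℝ) - j) - 1) * (π / (2 * lam)) = -(π / (2 * lam)) by ring,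
    show (2 * ((j : ℝ) + 1 - j) - 1) * (π / (2 * lam)) = π / (2 * lam) by ring, cos_neg,
    div_self hc]
  ring

theorem exists_eq_smul_vert_add_smul_vert (hlam : 2 ≤ lam) (hr : 0 < r) {z : ℝ × ℝ}
    (hz : z ≠ 0) :
    ∃ j : ℤ, ∃ a b : ℝ, 0 ≤ a ∧ 0 ≤ b ∧ z = a • vert lam r θ j + b • vert lam r θ (j + 1) := by
  obtain ⟨ρ, hρ, α, rfl⟩ := exists_pos_smul_dir hz
  have hl : (2 : ℝ) ≤ lam := by exact_mod_cast hlam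
  set δ := π / lam with hδ
  have hδ₀ : 0 < δ := by positivity
  have hδπ : δ < π := by rw [hδ, div_lt_iff₀ (by positivity)]; nlinarith [pi_pos]
  have hsδ : 0 < sin δ := sin_pos_of_pos_of_lt_pi hδ₀ hδπ
  set j := ⌊(α - θ) / δ⌋
  set β := θ + j * δ
  have hβ : β ≤ α := by
    have := Int.floor_le ((α - θ) / δ)
    rw [le_div_iff₀ hδ₀] at this
    linarith
  have hβδ : α < β + δ := by
    have := Int.lt_floor_add_one ((α - θ) / δ)
    rw [div_lt_iff₀ hδ₀] at this
    linarith
  have hj : vert lam r θ j = r • dir β := by rw [vert, mul_div_assoc]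
  have hj₁ : vert lam r θ (j + 1) = r • dir (β + δ) := by
    rw [vert]; push_cast; congr 2; ring
  refine ⟨j, ρ * sin (β + δ - α) / (r * sin δ), ρ * sin (α - β) / (r * sin δ), ?_, ?_, ?_⟩
  · exact div_nonneg (mul_nonneg hρ.le (sin_nonneg_of_nonneg_of_le_pi (by linarith)
      (by linarith))) (by positivity)
  · exact div_nonneg (mul_nonneg hρ.le (sin_nonneg_of_nonneg_of_le_pi (by linarith)
      (by linarith))) (by positivity)
  · calc ρ • dir α = (ρ / sin δ) • (sin δ • dir α) := by
          rw [smul_smul, div_mul_cancel₀ _ hsδ.ne']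
      _ = _ := by
        rw [sin_smul_dir α β δ, hj, hj₁, smul_add, smul_smul, smul_smul, smul_smul, smul_smul]
        congr 2 <;> field_simp

theorem vertexFunctional_vert_le_one (hr : r ≠ 0) (j i : ℤ) :
    vertexFunctional lam r θ j (vert lam r θ i) ≤ 1 := by
  rw [vertexFunctional_vert hr]
  exact cos_le_one _

theorem vert_eq_of_vertexFunctional_eq_one (hr : r ≠ 0) {j i : ℤ}
    (h : vertexFunctional lam r θ j (vert lam r θ i) = 1) : vert lam r θ i = vert lam r θ j := by
  rw [vertexFunctional_vert hr] at h
  simp only [vert]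
  rw [dir_eq_of_cos_sub_eq_one (α := θ + i * π / lam) (β := θ + j * π / lam) (by rw [← h]; ring_nf)]

theorem vertexFunctional_add_add_eq_zero {m : ℤ} (hm : cos (m * π / lam) = -(1 / 2)) (k : ℤ) :
    vertexFunctional lam r θ k + vertexFunctional lam r θ (k + m) +
      vertexFunctional lam r θ (k - m) = 0 := by
  simp only [vertexFunctional, ← smul_add]
  push_cast
  rw [← smul_zero r⁻¹, ← proj_add_proj_add_proj hm (θ + k * π / lam)]
  ring_nf

theorem edgeFunctional_add_add_eq_zero {m : ℤ} (hm : cos (m * π / lam) = -(1 / 2)) (k : ℤ) :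
    edgeFunctional lam r θ k + edgeFunctional lam r θ (k + m) +
      edgeFunctional lam r θ (k - m) = 0 := by
  simp only [edgeFunctional, ← smul_add]
  push_cast
  rw [← smul_zero (r * cos (π / (2 * lam)))⁻¹,
    ← proj_add_proj_add_proj hm (θ + k * π / lam + π / (2 * lam))]
  ring_nf

theorem exists_int_mul_pi_div_eq (hdvd : 3 ∣ lam) (hlam : 0 < lam) {α : ℝ}
    (hα : α = 2 * π / 3 ∨ α = -(2 * π / 3)) : ∃ m : ℤ, α = m * π / lam := by
  obtain ⟨t, rfl⟩ := hdvd
  have ht : (t : ℝ) ≠ 0 := Nat.cast_ne_zero.mpr (by omega)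
  rcases hα with rfl | rfl
  · exact ⟨2 * t, by push_cast; field_simp⟩
  · exact ⟨-(2 * t), by push_cast; field_simp⟩

end RegularPolygon

section UnitBall

variable {lam : ℕ} {r θ : ℝ} {N : ℝ × ℝ → ℝ} (hN : IsNormOn N)
  (hball : {x : ℝ × ℝ | N x ≤ 1} = convexHull ℝ (Set.range (vert lam r θ)))
include hN hball

theorem abs_le_of_apply_vert_le_one (L : (ℝ × ℝ) →ₗ[ℝ] ℝ) (hL : ∀ j, L (vert lam r θ j) ≤ 1)
    (y : ℝ × ℝ) : |L y| ≤ N y := by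
  refine hN.abs_le_of_le_one L (fun z hz => ?_) y
  have hz' : z ∈ convexHull ℝ (Set.range (vert lam r θ)) := hball ▸ hz
  exact convexHull_min (by rintro _ ⟨j, rfl⟩; exact hL j) (convex_halfSpace_le L.isLinear 1) hz'

theorem norm_vert (hr : r ≠ 0) (j : ℤ) : N (vert lam r θ j) = 1 := by
  have hle : vert lam r θ j ∈ {x | N x ≤ 1} := hball ▸ subset_convexHull ℝ _ ⟨j, rfl⟩
  have hge := abs_le_of_apply_vert_le_one hN hball _ (vertexFunctional_vert_le_one hr j)
    (vert lam r θ j)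
  rw [vertexFunctional_vert hr, sub_self, zero_mul, zero_div, cos_zero, abs_one] at hge
  exact le_antisymm hle hge

theorem isNormingN_vertexFunctional (hr : r ≠ 0) (j : ℤ) {t : ℝ} (ht : 0 ≤ t) :
    IsNormingN N (vertexFunctional lam r θ j) (t • vert lam r θ j) := by
  refine ⟨abs_le_of_apply_vert_le_one hN hball _ (vertexFunctional_vert_le_one hr j), ?_⟩
  rw [map_smul, hN.smul_of_nonneg ht, norm_vert hN hball hr, vertexFunctional_vert hr, sub_self,
    zero_mul, zero_div, cos_zero, smul_eq_mul]

theorem isNormingN_edgeFunctional (hlam : 2 ≤ lam) (hr : r ≠ 0) (j : ℤ) {a b : ℝ} (ha : 0 ≤ a)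
    (hb : 0 ≤ b) :
    IsNormingN N (edgeFunctional lam r θ j) (a • vert lam r θ j + b • vert lam r θ (j + 1)) := by
  have habs := abs_le_of_apply_vert_le_one hN hball _ (edgeFunctional_vert_le_one hlam hr j)
  refine ⟨habs, le_antisymm ?_ ?_⟩
  · exact (le_abs_self _).trans (habs _)
  · calc N (a • vert lam r θ j + b • vert lam r θ (j + 1))
        ≤ N (a • vert lam r θ j) + N (b • vert lam r θ (j + 1)) := hN.1 _ _
      _ = _ := by rw [hN.smul_of_nonneg ha, hN.smul_of_nonneg hb, norm_vert hN hball hr,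
          norm_vert hN hball hr, edgeFunctional_smul_vert_add_smul_vert hlam hr, mul_one, mul_one]

theorem eq_smul_vert_of_isNormingN (hr : r ≠ 0) {j : ℤ} {v : ℝ × ℝ}
    (h : IsNormingN N (vertexFunctional lam r θ j) v) : v = N v • vert lam r θ j := by
  rcases eq_or_ne v 0 with rfl | hv
  · rw [hN.map_zero, zero_smul]
  have hNv := hN.pos hv
  have hy : (N v)⁻¹ • v ∈ convexHull ℝ (Set.range (vert lam r θ)) :=
    hball ▸ (hN.inv_smul_self hv).le
  have hφ : vertexFunctional lam r θ j ((N v)⁻¹ • v) = 1 := by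
    rw [map_smul, h.2, smul_eq_mul, inv_mul_cancel₀ hNv.ne']
  have hs : ∀ x ∈ Set.range (vert lam r θ),
      vertexFunctional lam r θ j x < 1 ∨ x = vert lam r θ j := by
    rintro _ ⟨i, rfl⟩
    exact (vertexFunctional_vert_le_one hr j i).lt_or_eq.imp_right
      (vert_eq_of_vertexFunctional_eq_one hr)
  rw [← eq_of_mem_convexHull_of_apply_eq_one _ (vertexFunctional_vert_le_one hr j j) hs hy hφ,
    smul_smul, mul_inv_cancel₀ hNv.ne', one_smul]

theorem exists_mem_openCone_of_notMem_range (hlam : 2 ≤ lam) (hr : 0 < r) {w : ℝ × ℝ}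
    (hw : N w = 1) (hnot : w ∉ Set.range (vert lam r θ)) :
    ∃ j : ℤ, w ∈ openCone (vert lam r θ j) (vert lam r θ (j + 1)) := by
  have hw₀ : w ≠ 0 := by rintro rfl; rw [hN.map_zero] at hw; exact zero_ne_one hw
  obtain ⟨j, a, b, ha, hb, rfl⟩ := exists_eq_smul_vert_add_smul_vert (θ := θ) hlam hr hw₀
  have hab : a + b = 1 := by
    rw [← hw, ← (isNormingN_edgeFunctional hN hball hlam hr.ne' j ha hb).2,
      edgeFunctional_smul_vert_add_smul_vert hlam hr.ne']
  refine ⟨j, a, b, ha.lt_of_ne ?_, hb.lt_of_ne ?_, rfl⟩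
  · rintro rfl
    exact hnot ⟨j + 1, by rw [zero_smul, zero_add, show b = 1 by linarith, one_smul]⟩
  · rintro rfl
    exact hnot ⟨j, by rw [zero_smul, add_zero, show a = 1 by linarith, one_smul]⟩

end UnitBall

section Configurations

variable {lam : ℕ} {r θ : ℝ} {N : ℝ × ℝ → ℝ}

theorem mem_interior_ftSetN_of_mem_openCone (hN : IsNormOn N)
    (hball : {x : ℝ × ℝ | N x ≤ 1} = convexHull ℝ (Set.range (vert lam r θ))) (hlam : 2 ≤ lam)
    (hr : r ≠ 0) {m : ℤ} (hm : cos (m * π / lam) = -(1 / 2)) {k : ℤ} {w : ℝ × ℝ}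
    (hw : w ∈ openCone (vert lam r θ k) (vert lam r θ (k + 1))) {x₁ x₂ x₃ p : ℝ × ℝ}
    {t₁ t₂ t₃ : ℝ} (ht₁ : 0 < t₁) (ht₂ : 0 < t₂) (ht₃ : 0 < t₃) (h₁ : x₁ - p = t₁ • w)
    (h₂ : x₂ - p = t₂ • rot (m * π / lam) w) (h₃ : x₃ - p = t₃ • rot (-(m * π / lam)) w) :
    p ∈ interior (ftSetN N ![x₁, x₂, x₃]) := by
  set j : Fin 3 → ℤ := ![k, k + m, k - m]
  refine mem_interior_ftSetN_of_isNormingN hN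
    (C := fun i => openCone (vert lam r θ (j i)) (vert lam r θ (j i + 1)))
    (L := fun i => edgeFunctional lam r θ (j i)) (fun i => isOpen_openCone_vert hlam hr _)
    (fun i => ?_) (fun i v hv => ?_) ?_
  · fin_cases i
    · simpa [j, h₁] using smul_map_mem_openCone LinearMap.id hw ht₁
    · have h := smul_map_mem_openCone (rot (m * π / lam)) hw ht₂
      rw [rot_vert, rot_vert, add_right_comm] at h
      simpa [j, h₂] using h
    · have h := smul_map_mem_openCone (rot (-(m * π / lam))) hw ht₃
      rw [rot_neg_vert, rot_neg_vert, ← sub_add_eq_add_sub] at h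
      simpa [j, h₃] using h
  · obtain ⟨a, b, ha, hb, rfl⟩ := hv
    exact isNormingN_edgeFunctional hN hball hlam hr _ ha.le hb.le
  · simpa [Fin.sum_univ_three, j] using edgeFunctional_add_add_eq_zero (r := r) (θ := θ) hm k

theorem ftSetN_eq_singleton_of_vert (hN : IsNormOn N)
    (hball : {x : ℝ × ℝ | N x ≤ 1} = convexHull ℝ (Set.range (vert lam r θ))) (hr : r ≠ 0)
    {m : ℤ} (hm : cos (m * π / lam) = -(1 / 2)) {k : ℤ} {x₁ x₂ x₃ p : ℝ × ℝ} {t₁ t₂ t₃ : ℝ}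
    (ht₁ : 0 ≤ t₁) (ht₂ : 0 ≤ t₂) (ht₃ : 0 ≤ t₃) (h₁ : x₁ - p = t₁ • vert lam r θ k)
    (h₂ : x₂ - p = t₂ • rot (m * π / lam) (vert lam r θ k))
    (h₃ : x₃ - p = t₃ • rot (-(m * π / lam)) (vert lam r θ k)) :
    ftSetN N ![x₁, x₂, x₃] = {p} := by
  rw [rot_vert] at h₂
  rw [rot_neg_vert] at h₃
  set L : Fin 3 → (ℝ × ℝ) →ₗ[ℝ] ℝ := ![vertexFunctional lam r θ k,
    vertexFunctional lam r θ (k + m), vertexFunctional lam r θ (k - m)]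
  have hL : ∀ i, IsNormingN N (L i) (![x₁, x₂, x₃] i - p) := by
    intro i
    fin_cases i
    · simpa [L, h₁] using isNormingN_vertexFunctional hN hball hr k ht₁
    · simpa [L, h₂] using isNormingN_vertexFunctional hN hball hr (k + m) ht₂
    · simpa [L, h₃] using isNormingN_vertexFunctional hN hball hr (k - m) ht₃
  have hsum : ∑ i, L i = 0 := by
    simpa [Fin.sum_univ_three, L] using vertexFunctional_add_add_eq_zero (r := r) (θ := θ) hm k
  refine Set.eq_singleton_iff_unique_mem.mpr ⟨mem_ftSetN_of_isNormingN hN hL hsum, fun q hq => ?_⟩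
  have hq₁ := eq_smul_vert_of_isNormingN hN hball hr (isNormingN_of_mem_ftSetN hN hL hsum hq 0)
  have hq₂ := eq_smul_vert_of_isNormingN hN hball hr (isNormingN_of_mem_ftSetN hN hL hsum hq 1)
  simp only [Matrix.cons_val_zero, Matrix.cons_val_one] at hq₁ hq₂
  have hcross : cross (vert lam r θ k) (vert lam r θ (k + m)) ≠ 0 := by
    rw [cross_vert]
    push_cast
    rw [add_sub_cancel_left]
    exact mul_ne_zero (pow_ne_zero 2 hr) (sin_ne_zero_of_cos_eq_neg_half hm)
  have hqp : q - p = (t₁ - N (x₁ - q)) • vert lam r θ k := by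
    rw [sub_smul, ← h₁, ← hq₁, sub_sub_sub_cancel_left]
  have hcoeff := eq_zero_of_smul_eq_smul_of_cross_ne_zero hcross (b := t₂ - N (x₂ - q)) (by
    rw [← hqp, sub_smul, ← h₂, ← hq₂, sub_sub_sub_cancel_left])
  rw [← sub_eq_zero, hqp, hcoeff, zero_smul]

end Configurations

theorem lambda_plane_ft_of_torricelli_point_general
    (lam : ℕ) (hlam : 3 ≤ lam) (hdvd : 3 ∣ lam)
    (N : ℝ × ℝ → ℝ) (r θ : ℝ) (hr : 0 < r) (hN : IsNormOn N)
    (hball : {x : ℝ × ℝ | N x ≤ 1} = convexHull ℝ (Set.range (polyVerts lam r θ)))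
    (x₁ x₂ x₃ p : ℝ × ℝ)
    (hp₁₂ : eangle (x₁ - p) (x₂ - p) = 2 * π / 3)
    (hp₂₃ : eangle (x₂ - p) (x₃ - p) = 2 * π / 3)
    (hp₁₃ : eangle (x₁ - p) (x₃ - p) = 2 * π / 3) :
    (((N (x₁ - p))⁻¹ • (x₁ - p) ∉ Set.range (polyVerts lam r θ) ∧
      (N (x₂ - p))⁻¹ • (x₂ - p) ∉ Set.range (polyVerts lam r θ) ∧
      (N (x₃ - p))⁻¹ • (x₃ - p) ∉ Set.range (polyVerts lam r θ) →
        IsCompact (ftSetN N ![x₁, x₂, x₃]) ∧ Convex ℝ (ftSetN N ![x₁, x₂, x₃]) ∧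
          (interior (ftSetN N ![x₁, x₂, x₃])).Nonempty)) ∧
    ((N (x₁ - p))⁻¹ • (x₁ - p) ∈ Set.range (polyVerts lam r θ) ∧
     (N (x₂ - p))⁻¹ • (x₂ - p) ∈ Set.range (polyVerts lam r θ) ∧
     (N (x₃ - p))⁻¹ • (x₃ - p) ∈ Set.range (polyVerts lam r θ) →
        ftSetN N ![x₁, x₂, x₃] = {p}) := by
  rw [range_polyVerts (by omega)] at hball ⊢
  obtain ⟨α, hα, ⟨c₂, hc₂, hu₂⟩, c₃, hc₃, hu₃⟩ := exists_rot_of_torricelli hp₁₂ hp₂₃ hp₁₃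
  obtain ⟨m, rfl⟩ := exists_int_mul_pi_div_eq hdvd (by omega) hα
  have hm : cos (m * π / lam) = -(1 / 2) := by
    rcases hα with h | h <;> rw [h]
    · exact cos_two_pi_div_three
    · rw [cos_neg, cos_two_pi_div_three]
  have hu₁ := (ne_zero_of_eangle_eq hp₁₂).1
  have hN₁ := hN.pos hu₁
  set w := (N (x₁ - p))⁻¹ • (x₁ - p)
  have h₁ : x₁ - p = N (x₁ - p) • w := (smul_inv_smul₀ hN₁.ne' _).symm
  have h₂ : x₂ - p = (c₂ * N (x₁ - p)) • rot (m * π / lam) w := by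
    rw [hu₂, mul_smul, ← map_smul (rot _) (N (x₁ - p)) w, ← h₁]
  have h₃ : x₃ - p = (c₃ * N (x₁ - p)) • rot (-(m * π / lam)) w := by
    rw [hu₃, mul_smul, ← map_smul (rot _) (N (x₁ - p)) w, ← h₁]
  refine ⟨fun ⟨hw, _⟩ => ?_, fun ⟨⟨k, hk⟩, _⟩ => ?_⟩
  · obtain ⟨k, hk⟩ := exists_mem_openCone_of_notMem_range hN hball (by omega) hr
      (hN.inv_smul_self hu₁) hw
    exact ⟨isCompact_ftSetN hN, convex_ftSetN hN, p, mem_interior_ftSetN_of_mem_openCone hN hball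
      (by omega) hr.ne' hm hk hN₁ (mul_pos hc₂ hN₁) (mul_pos hc₃ hN₁) h₁ h₂ h₃⟩
  · rw [← hk] at h₁ h₂ h₃
    exact ftSetN_eq_singleton_of_vert hN hball hr.ne' hm hN₁.le (mul_pos hc₂ hN₁).le
      (mul_pos hc₃ hN₁).le h₁ h₂ h₃

/-- Let λ be divisible by 3, let x₁, x₂, x₃ be non-collinear points whose triangle has
all Euclidean angles less than 120°, and let p be the Torricelli point of the triangle
(all angles ∠xᵢ p xⱼ equal 120°).  If none of the normalized vectors
x̂ᵢ = (xᵢ − p)/N(xᵢ − p) is a vertex of the 2λ-gon, then the Fermat–Torricelli set is a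
non-degenerate convex polygon (compact, convex, with nonempty interior); if all the x̂ᵢ
are vertices of the 2λ-gon, then the Fermat–Torricelli set is {p}. -/
theorem lambda_plane_ft_of_torricelli_point
    (lam : ℕ) (hlam : 3 ≤ lam) (hdvd : 3 ∣ lam)
    (N : ℝ × ℝ → ℝ) (r θ : ℝ) (hr : 0 < r) (hN : IsNormOn N)
    (hball : {x : ℝ × ℝ | N x ≤ 1} = convexHull ℝ (Set.range (polyVerts lam r θ)))
    (x₁ x₂ x₃ p : ℝ × ℝ)
    (hncol : ¬ Collinear ℝ ({x₁, x₂, x₃} : Set (ℝ × ℝ)))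
    (hang₁ : eangle (x₂ - x₁) (x₃ - x₁) < 2 * π / 3)
    (hang₂ : eangle (x₁ - x₂) (x₃ - x₂) < 2 * π / 3)
    (hang₃ : eangle (x₁ - x₃) (x₂ - x₃) < 2 * π / 3)
    (hp₁₂ : eangle (x₁ - p) (x₂ - p) = 2 * π / 3)
    (hp₂₃ : eangle (x₂ - p) (x₃ - p) = 2 * π / 3)
    (hp₁₃ : eangle (x₁ - p) (x₃ - p) = 2 * π / 3) :
    (((N (x₁ - p))⁻¹ • (x₁ - p) ∉ Set.range (polyVerts lam r θ) ∧
      (N (x₂ - p))⁻¹ • (x₂ - p) ∉ Set.range (polyVerts lam r θ) ∧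
      (N (x₃ - p))⁻¹ • (x₃ - p) ∉ Set.range (polyVerts lam r θ) →
        IsCompact (ftSetN N ![x₁, x₂, x₃]) ∧ Convex ℝ (ftSetN N ![x₁, x₂, x₃]) ∧
          (interior (ftSetN N ![x₁, x₂, x₃])).Nonempty)) ∧
    ((N (x₁ - p))⁻¹ • (x₁ - p) ∈ Set.range (polyVerts lam r θ) ∧
     (N (x₂ - p))⁻¹ • (x₂ - p) ∈ Set.range (polyVerts lam r θ) ∧
     (N (x₃ - p))⁻¹ • (x₃ - p) ∈ Set.range (polyVerts lam r θ) →
        ftSetN N ![x₁, x₂, x₃] = {p}) :=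
  lambda_plane_ft_of_torricelli_point_general lam hlam hdvd N r θ hr hN hball x₁ x₂ x₃ p hp₁₂ hp₂₃
    hp₁₃
end

section
/- For every natural number n > 2, the double inequality n/3 − 1/3 < (n/π)·arctan(√(4·tan²(π/n) + 3)) < n/3 + 1/3 holds. In particular, (n/π)·arctan(√(4·tan²(π/n) + 3)) is never a natural number k when n is not divisible by 3. -/
/-!
Put `x = π / n ∈ (0, π / 3]`. Since `4 tan² x + 3 ≥ 3`, the arctangent is at least `π / 3`, which
exceeds `(π - x) / 3`. For the upper bound let `θ = (π + x) / 3 ∈ (π / 3, π / 2)` and `t = tan θ`.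
As `3θ = x + π`, the triple-angle formula gives `tan x = (3t - t³) / (1 - 3t²)`, and then
`t² - (4 tan² x + 3) = (t² - 3)(5t⁴ + 6t² + 1) / (1 - 3t²)² > 0` because `t > √3`.
Multiplying by `n / π` turns `(π ∓ x) / 3` into `n / 3 ∓ 1 / 3`, an open interval of length
`2 / 3` around `n / 3` that can contain an integer `k` only if `n = 3k`.
-/

open Real

namespace Real

/-- Like `Real.tan_two_mul`, this holds without side conditions: when `cos x = 0` or
`cos (3 * x) = 0` both sides are `0`. -/
theorem tan_three_mul (x : ℝ) : tan (3 * x) = (3 * tan x - tan x ^ 3) / (1 - 3 * tan x ^ 2) := by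
  by_cases hc : cos x = 0
  · have h3 : cos (3 * x) = 0 := by rw [cos_three_mul, hc]; ring
    simp [tan_eq_sin_div_cos, hc, h3]
  · have hsin : sin (3 * x) = cos x ^ 3 * (3 * tan x - tan x ^ 3) := by
      rw [sin_three_mul, tan_eq_sin_div_cos]
      field_simp
      linear_combination (-3 * sin x) * sin_sq_add_cos_sq x
    have hcos : cos (3 * x) = cos x ^ 3 * (1 - 3 * tan x ^ 2) := by
      rw [cos_three_mul, tan_eq_sin_div_cos]
      field_simp
      linear_combination 3 * sin_sq_add_cos_sq x
    rw [tan_eq_sin_div_cos (3 * x), hsin, hcos, mul_div_mul_left _ _ (pow_ne_zero 3 hc)]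

end Real

theorem four_mul_sq_add_three_lt_sq_of_three_lt_sq {t : ℝ} (ht : 3 < t ^ 2) :
    4 * ((3 * t - t ^ 3) / (1 - 3 * t ^ 2)) ^ 2 + 3 < t ^ 2 := by
  set a := (3 * t - t ^ 3) / (1 - 3 * t ^ 2)
  have ha : a * (1 - 3 * t ^ 2) = 3 * t - t ^ 3 := div_mul_cancel₀ _ (by nlinarith)
  have key : (t ^ 2 - 3 - 4 * a ^ 2) * (1 - 3 * t ^ 2) ^ 2
      = (t ^ 2 - 3) * (5 * t ^ 4 + 6 * t ^ 2 + 1) := by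
    linear_combination (-4) * (a * (1 - 3 * t ^ 2) + 3 * t - t ^ 3) * ha
  have hpos : 0 < (t ^ 2 - 3 - 4 * a ^ 2) * (1 - 3 * t ^ 2) ^ 2 := by
    rw [key]
    have : 0 < t ^ 2 - 3 := by linarith
    positivity
  linarith [pos_of_mul_pos_left hpos (sq_nonneg _)]

theorem sub_div_three_lt_arctan_sqrt {x : ℝ} (hx : 0 < x) :
    (π - x) / 3 < arctan √(4 * tan x ^ 2 + 3) := calc
  (π - x) / 3 < π / 3 := by linarith
  _ = arctan √3 := arctan_sqrt_three.symm
  _ ≤ arctan √(4 * tan x ^ 2 + 3) := by gcongr; nlinarith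

theorem arctan_sqrt_lt_add_div_three {x : ℝ} (hx₀ : 0 < x) (hx : x < π / 2) :
    arctan √(4 * tan x ^ 2 + 3) < (π + x) / 3 := by
  set θ := (π + x) / 3 with hθ_def
  have hθ₀ : π / 3 < θ := by linarith
  have hθ : θ < π / 2 := by linarith
  have hsqrt3 : √3 < tan θ := by
    rw [← tan_pi_div_three]
    exact tan_lt_tan_of_lt_of_lt_pi_div_two (by linarith) hθ (by linarith)
  have htan_x : tan x = (3 * tan θ - tan θ ^ 3) / (1 - 3 * tan θ ^ 2) := by
    rw [← tan_three_mul, show 3 * θ = x + π by ring, tan_add_pi]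
  have hlt : √(4 * tan x ^ 2 + 3) < tan θ := by
    rw [sqrt_lt' ((sqrt_nonneg 3).trans_lt hsqrt3), htan_x]
    apply four_mul_sq_add_three_lt_sq_of_three_lt_sq
    nlinarith [sq_sqrt (show (0 : ℝ) ≤ 3 by norm_num), sqrt_nonneg 3]
  calc arctan √(4 * tan x ^ 2 + 3) < arctan (tan θ) := arctan_strictMono hlt
    _ = θ := arctan_tan (by linarith) hθ

theorem Nat.eq_three_mul_of_lt_of_lt {n k : ℕ} (h₁ : (n : ℝ) / 3 - 1 / 3 < k)
    (h₂ : (k : ℝ) < n / 3 + 1 / 3) : n = 3 * k := by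
  have : n < 3 * k + 1 := by exact_mod_cast (by linarith : (n : ℝ) < 3 * k + 1)
  have : 3 * k < n + 1 := by exact_mod_cast (by linarith : 3 * (k : ℝ) < n + 1)
  omega

/-- For every natural number n > 2 the double inequality
n/3 − 1/3 < (n/π)·arctan(√(4·tan²(π/n) + 3)) < n/3 + 1/3 holds; in particular if n is not
divisible by 3 then (n/π)·arctan(√(4·tan²(π/n) + 3)) is never a natural number. -/
theorem arctan_double_inequality (n : ℕ) (hn : 2 < n) :
    ((n : ℝ) / 3 - 1 / 3 <
        ((n : ℝ) / π) * Real.arctan (Real.sqrt (4 * Real.tan (π / n) ^ 2 + 3)) ∧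
      ((n : ℝ) / π) * Real.arctan (Real.sqrt (4 * Real.tan (π / n) ^ 2 + 3)) <
        (n : ℝ) / 3 + 1 / 3) ∧
    (¬ 3 ∣ n → ∀ k : ℕ,
      ((n : ℝ) / π) * Real.arctan (Real.sqrt (4 * Real.tan (π / n) ^ 2 + 3)) ≠ (k : ℝ)) := by
  have hn' : (3 : ℝ) ≤ n := by exact_mod_cast hn
  have hx₀ : 0 < π / n := by positivity
  have hx : π / n < π / 2 := div_lt_div_of_pos_left pi_pos (by norm_num) (by linarith)
  have hscale : 0 < (n : ℝ) / π := by positivity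
  have hlow := mul_lt_mul_of_pos_left (sub_div_three_lt_arctan_sqrt hx₀) hscale
  have hup := mul_lt_mul_of_pos_left (arctan_sqrt_lt_add_div_three hx₀ hx) hscale
  have hL : (n : ℝ) / π * ((π - π / n) / 3) = n / 3 - 1 / 3 := by field_simp
  have hR : (n : ℝ) / π * ((π + π / n) / 3) = n / 3 + 1 / 3 := by field_simp
  rw [hL] at hlow
  rw [hR] at hup
  refine ⟨⟨hlow, hup⟩, fun hndvd k hk => hndvd ⟨k, ?_⟩⟩
  rw [hk] at hlow hup
  exact Nat.eq_three_mul_of_lt_of_lt hlow hup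
end

section
/- For every real number x with 0 < x < 1/√3, the inequality 4·((3x − x³)/(1 − 3x²))² + 3 < ((x + √3)/(1 − √3·x))² holds. -/
open Real

/-- For every real x with 0 < x < 1/√3 one has
4·((3x − x³)/(1 − 3x²))² + 3 < ((x + √3)/(1 − √3·x))². -/
theorem rational_inequality (x : ℝ) (h0 : 0 < x) (h1 : x < 1 / Real.sqrt 3) :
    4 * ((3 * x - x ^ 3) / (1 - 3 * x ^ 2)) ^ 2 + 3 <
      ((x + Real.sqrt 3) / (1 - Real.sqrt 3 * x)) ^ 2 := by
  set s := Real.sqrt 3 with hs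
  have hspos : 0 < s := Real.sqrt_pos.mpr (by norm_num)
  have hsq : s ^ 2 = 3 := Real.sq_sqrt (by norm_num)
  have hsx : s * x < 1 := by
    have := (lt_div_iff₀ hspos).mp h1
    linarith [this]
  have hE : 0 < 1 - s * x := by linarith
  have hP : 0 < 1 + s * x := by positivity
  have hx1 : x < 1 := by nlinarith [hsq, hspos]
  have hD : 1 - 3 * x ^ 2 = (1 - s * x) * (1 + s * x) := by
    have : (1 - s * x) * (1 + s * x) = 1 - s ^ 2 * x ^ 2 := by ring
    rw [this, hsq]
  have hx4 : x ^ 4 < 1 := pow_lt_one₀ h0.le hx1 (by norm_num)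
  have h6 : x ^ 6 < x ^ 2 := by nlinarith [pow_pos h0 2, hx4]
  have hpos : 0 < s * x * (1 + x ^ 2) := by positivity
  have hfac : (x + s) ^ 2 * (1 + s * x) ^ 2 = (4 * x + s * (1 + x ^ 2)) ^ 2 := by
    have h : (x + s) * (1 + s * x) = 4 * x + s * (1 + x ^ 2) := by
      linear_combination x * hsq
    calc (x + s) ^ 2 * (1 + s * x) ^ 2 = ((x + s) * (1 + s * x)) ^ 2 := by ring
      _ = (4 * x + s * (1 + x ^ 2)) ^ 2 := by rw [h]
  have key : 4 * (3 * x - x ^ 3) ^ 2 + 3 * ((1 - s * x) * (1 + s * x)) ^ 2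
      < (x + s) ^ 2 * (1 + s * x) ^ 2 := by
    rw [← hD, hfac]
    nlinarith [hsq, hpos, h6, sq_nonneg (1 + x ^ 2)]
  have hd : 0 < 1 - 3 * x ^ 2 := by rw [hD]; positivity
  rw [div_pow, div_pow, ← mul_div_assoc, div_add' _ _ _ (pow_ne_zero 2 hd.ne'),
    div_lt_div_iff₀ (pow_pos hd 2) (pow_pos hE 2)]
  have final := mul_lt_mul_of_pos_right key (pow_pos hE 2)
  rw [hD]
  linarith [final, sq_nonneg ((1 - s * x) * (1 + s * x))]
end
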